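/- arXiv:math/0310275 — 2 statements merged into one kernel-verified Lean document; each statement's English description precedes it below -/
import Mathlib

section
/- For every n ≥ 1, both q_n/p and p·q_n^{−1} belong to R; that is, writing q_n/p = ∑_{i≥0} a_i π^i and p·q_n^{−1} = ∑_{i≥0} b_i π^i (q_n is a unit of Q_p[[π]] since its constant term is p ≠ 0), one has v_p(a_i) + i/(p−1) ≥ 0 and v_p(b_i) + i/(p−1) ≥ 0 for all i ≥ 0. -/
open PowerSeries Filter Finset

noncomputable section

variable (p : ℕ) [Fact p.Prime]

/-- Substitution of a power series `g` (with zero constant coefficient in all our uses)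
into a power series `f`: the coefficient of degree `j` of `f(g)` only involves the
monomials of `f` of degree `≤ j`. -/
def psSubst {A : Type*} [CommRing A] (g f : PowerSeries A) : PowerSeries A :=
  PowerSeries.mk fun j => ∑ i ∈ Finset.range (j + 1),
    PowerSeries.coeff (R := A) i f * PowerSeries.coeff (R := A) j (g ^ i)

/-- The endomorphism `φ` of `A[[π]]`, substituting `(1+π)^p - 1` for `π`. -/
def phiA (A : Type*) [CommRing A] : PowerSeries A → PowerSeries A :=
  psSubst ((1 + PowerSeries.X) ^ p - 1)

/-- The binomial coefficient `binom(c, n)` for `c ∈ ℤ_p`, computed in `ℚ_p`. -/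
def binomC (c : ℤ_[p]) (n : ℕ) : ℚ_[p] :=
  Polynomial.eval (c : ℚ_[p]) (descPochhammer ℚ_[p] n) / (n.factorial : ℚ_[p])

/-- The binomial power series `(1+π)^c = ∑_{n≥0} binom(c,n) π^n` for `c ∈ ℤ_p`. -/
def onePlusPiPow (c : ℤ_[p]) : PowerSeries ℚ_[p] := PowerSeries.mk (binomC p c)

/-- The endomorphism `γ_c` of `ℚ_p[[π]]`, substituting `(1+π)^c - 1` for `π`. -/
def gammaQ (c : ℤ_[p]) : PowerSeries ℚ_[p] → PowerSeries ℚ_[p] :=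
  psSubst (onePlusPiPow p c - 1)

/-- The partial products `∏_{n=0}^{N} φ^{2n+1}(q)/p` (whose limit is `λ₊`). -/
def partialPlus (q : PowerSeries ℚ_[p]) (N : ℕ) : PowerSeries ℚ_[p] :=
  ∏ n ∈ Finset.range (N + 1), (p : ℚ_[p])⁻¹ • (phiA p ℚ_[p])^[2 * n + 1] q

/-- The partial products `∏_{n=0}^{N} φ^{2n}(q)/p` (whose limit is `λ₋`). -/
def partialMinus (q : PowerSeries ℚ_[p]) (N : ℕ) : PowerSeries ℚ_[p] :=
  ∏ n ∈ Finset.range (N + 1), (p : ℚ_[p])⁻¹ • (phiA p ℚ_[p])^[2 * n] q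

/-- Convergence in `ℚ_p[[π]]` for the topology of coefficientwise convergence. -/
def CoeffTendsto (F : ℕ → PowerSeries ℚ_[p]) (L : PowerSeries ℚ_[p]) : Prop :=
  ∀ d : ℕ, Filter.Tendsto (fun N => PowerSeries.coeff (R := ℚ_[p]) d (F N))
    Filter.atTop (nhds (PowerSeries.coeff (R := ℚ_[p]) d L))

/-- A power series with `ℚ_p` coefficients has all its coefficients in `ℤ_p`. -/
def IntSeries (f : PowerSeries ℚ_[p]) : Prop := ∀ n, ‖PowerSeries.coeff (R := ℚ_[p]) n f‖ ≤ 1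

/-- Membership in the ring `R` of series `∑ a_i π^i` with `v_p(a_i) + i/(p-1) ≥ 0`,
expressed via norms: `‖a_i‖ ≤ p^{i/(p-1)}`. -/
def memR (f : PowerSeries ℚ_[p]) : Prop :=
  ∀ i : ℕ, ‖PowerSeries.coeff (R := ℚ_[p]) i f‖ ≤ (p : ℝ) ^ ((i : ℝ) / ((p : ℝ) - 1))

/-- The series `p^m λ₋^{k-1} λ₊^{-(k-1)}`, where `m = ⌊(k-2)/(p-1)⌋`. -/
def zFull (k : ℕ) (lamPlus lamMinus : PowerSeries ℚ_[p]) : PowerSeries ℚ_[p] :=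
  (p : PowerSeries ℚ_[p]) ^ ((k - 2) / (p - 1)) * lamMinus ^ (k - 1) * lamPlus⁻¹ ^ (k - 1)

/-- The truncation `z = z_0 + z_1 π + ⋯ + z_{k-2} π^{k-2}` of `p^m λ₋^{k-1} λ₊^{-(k-1)}`. -/
def zSeries (k : ℕ) (lamPlus lamMinus : PowerSeries ℚ_[p]) : PowerSeries ℚ_[p] :=
  PowerSeries.mk fun i =>
    if i ≤ k - 2 then PowerSeries.coeff (R := ℚ_[p]) i (zFull p k lamPlus lamMinus) else 0

/-- The two-variable power series ring `ℚ_p[[π, X]]`, realized as `(ℚ_p[[π]])[[X]]`: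
the inner variable is `π` and the outer variable is `X`. -/
abbrev PS2 := PowerSeries (PowerSeries ℚ_[p])

/-- `φ` extended to `ℚ_p[[π, X]]`, acting as before on `π` and trivially on `X`. -/
def phi2 : PS2 p → PS2 p := fun F =>
  PowerSeries.mk fun n => phiA p ℚ_[p] (PowerSeries.coeff (R := (PowerSeries ℚ_[p])) n F)

/-- `γ_c` extended to `ℚ_p[[π, X]]`, acting as before on `π` and trivially on `X`. -/
def gamma2 (c : ℤ_[p]) : PS2 p → PS2 p := fun F =>
  PowerSeries.mk fun n => gammaQ p c (PowerSeries.coeff (R := (PowerSeries ℚ_[p])) n F)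

/-- A two-variable power series has all its coefficients in `ℤ_p`,
i.e. lies in `ℤ_p[[π, X]]`. -/
def IntSeries2 (F : PS2 p) : Prop :=
  ∀ n j, ‖PowerSeries.coeff (R := ℚ_[p]) j (PowerSeries.coeff (R := (PowerSeries ℚ_[p])) n F)‖ ≤ 1

/-- The element `π` of `ℚ_p[[π, X]]`. -/
def piVar : PS2 p := PowerSeries.C (R := PowerSeries ℚ_[p]) PowerSeries.X

/-- The matrix `P(X)` with rows `(0, -1)` and `(q^{k-1}, X·z)`. -/
def Pmat (k : ℕ) (q z : PowerSeries ℚ_[p]) : Matrix (Fin 2) (Fin 2) (PS2 p) :=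
  !![0, -1;
     PowerSeries.C (R := PowerSeries ℚ_[p]) (q ^ (k - 1)),
       PowerSeries.X * PowerSeries.C (R := PowerSeries ℚ_[p]) z]

/-- A matrix has entries in `ℤ_p[[π, X]]`. -/
def IntMat (H : Matrix (Fin 2) (Fin 2) (PS2 p)) : Prop := ∀ i j, IntSeries2 p (H i j)

/-- A matrix is `≡ Id mod π`, i.e. `H - Id ∈ π · M₂(ℤ_p[[π, X]])`. -/
def ModPiId (H : Matrix (Fin 2) (Fin 2) (PS2 p)) : Prop :=
  ∃ H' : Matrix (Fin 2) (Fin 2) (PS2 p), IntMat p H' ∧ H = 1 + piVar p • H'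

/-- The conditions satisfied by the matrix `G_c(X)`:
entries in `ℤ_p[[π,X]]`, `G ≡ Id mod π`, and `P(X)·φ(G) = G·γ_c(P(X))`. -/
def IsGmat (k : ℕ) (q z : PowerSeries ℚ_[p]) (c : ℤ_[p])
    (G : Matrix (Fin 2) (Fin 2) (PS2 p)) : Prop :=
  IntMat p G ∧ ModPiId p G ∧
    Pmat p k q z * G.map (phi2 p) = G * (Pmat p k q z).map (gamma2 p c)

/-- The matrix `P₀` with rows `(0, -1)` and `(p^{k-1}, p^m X)`, `m = ⌊(k-2)/(p-1)⌋`. -/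
def P0mat (k : ℕ) : Matrix (Fin 2) (Fin 2) (PowerSeries ℤ_[p]) :=
  !![0, -1;
     (p : PowerSeries ℤ_[p]) ^ (k - 1),
       (p : PowerSeries ℤ_[p]) ^ ((k - 2) / (p - 1)) * PowerSeries.X]

section Efield

variable (E : Type*) [NormedField E] [NormedAlgebra ℚ_[p] E] [IsUltrametricDist E]

/-- The ring of integers `O_E` of `E`: the elements of norm at most `1`. -/
def ringOfInt : Subring E where
  carrier := {x : E | ‖x‖ ≤ 1}
  zero_mem' := by simp
  one_mem' := by simp
  add_mem' {a b} ha hb := le_trans (IsUltrametricDist.norm_add_le_max a b) (max_le ha hb)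
  neg_mem' {a} ha := by simpa using ha
  mul_mem' {a b} ha hb := by
    have h := norm_mul a b
    simp only [Set.mem_setOf_eq] at *
    nlinarith [norm_nonneg a, norm_nonneg b]

/-- Evaluation `ev_α : ℚ_p[[π, X]] → E[[π]]` substituting `α` for `X`. -/
def evalX (α : E) (F : PS2 p) : PowerSeries E :=
  PowerSeries.mk fun j =>
    ∑' n : ℕ, algebraMap ℚ_[p] E
      (PowerSeries.coeff (R := ℚ_[p]) j (PowerSeries.coeff (R := (PowerSeries ℚ_[p])) n F)) * α ^ n

/-- `γ_c` on `E[[π]]`: substitution of `(1+π)^c - 1` for `π` (coefficients mapped to `E`). -/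
def gammaE (c : ℤ_[p]) : PowerSeries E → PowerSeries E :=
  psSubst ((onePlusPiPow p c).map (algebraMap ℚ_[p] E) - 1)

end Efield

end

/-! Modulo `p` we have `(1+π)^p - 1 ≡ π^p`, so `φ` preserves the ideal `(p, π^{p-1})` of `ℤ_p[[π]]`,
which contains `q`. Hence every `q_n` is integral with constant term `p` and all coefficients of
degree `< p-1` divisible by `p`, so `‖coeff i (q_n/p)‖ ≤ p^{i/(p-1)}`. The weight
`i ↦ p^{i/(p-1)}` is multiplicative, so the recursion for the coefficients of an inverse shows
that the bound passes to `(q_n/p)⁻¹ = p q_n⁻¹`, whose constant term is `1`. -/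

namespace PowerSeries

variable {K : Type*}

theorem norm_coeff_mul_le_of_forall [NormedRing K] [IsUltrametricDist K] {f g : K⟦X⟧} {n : ℕ}
    {C : ℝ} (h : ∀ i j, i + j = n → ‖coeff i f‖ * ‖coeff j g‖ ≤ C) :
    ‖coeff n (f * g)‖ ≤ C := by
  rw [coeff_mul]
  refine IsUltrametricDist.norm_sum_le_of_forall_le_of_nonneg
    ((mul_nonneg (norm_nonneg _) (norm_nonneg _)).trans (h 0 n (zero_add n))) fun x hx => ?_
  exact (norm_mul_le _ _).trans (h x.1 x.2 (mem_antidiagonal.mp hx))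

theorem norm_coeff_inv_le [NormedField K] [IsUltrametricDist K] {f : K⟦X⟧} {w : ℕ → ℝ}
    (hf₀ : ‖constantCoeff f‖ = 1) (hw₀ : 1 ≤ w 0) (hw : ∀ i j, w i * w j ≤ w (i + j))
    (hf : ∀ i, ‖coeff i f‖ ≤ w i) (n : ℕ) : ‖coeff n f⁻¹‖ ≤ w n := by
  induction n using Nat.strong_induction_on with
  | _ n ih =>
    rw [coeff_inv]
    split_ifs with hn
    · rwa [hn, norm_inv, hf₀, inv_one]
    · rw [norm_mul, norm_neg, norm_inv, hf₀, inv_one, one_mul]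
      refine IsUltrametricDist.norm_sum_le_of_forall_le_of_nonneg
        ((norm_nonneg _).trans (hf n)) fun x hx => ?_
      split_ifs with hx₂
      · calc ‖coeff x.1 f * coeff x.2 f⁻¹‖
            ≤ w x.1 * w x.2 := by
              rw [norm_mul]
              exact mul_le_mul (hf _) (ih _ hx₂) (norm_nonneg _) ((norm_nonneg _).trans (hf _))
          _ ≤ w n := mem_antidiagonal.mp hx ▸ hw _ _
      · rw [norm_zero]
        exact (norm_nonneg _).trans (hf n)

theorem coeff_one_add_X_pow_sub_one {A : Type*} [CommRing A] (m k : ℕ) :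
    coeff k ((1 + X) ^ m - 1 : A⟦X⟧) = if k = 0 then 0 else (m.choose k : A) := by
  have h : ((1 + X) ^ m : A⟦X⟧) = (((1 + Polynomial.X) ^ m : Polynomial A) : A⟦X⟧) := by simp
  rw [map_sub, h, Polynomial.coeff_coe, Polynomial.coeff_one_add_X_pow, coeff_one]
  split_ifs with hk <;> simp [hk]

end PowerSeries

theorem coeff_phiA {p : ℕ} {A : Type*} [CommRing A] (f : PowerSeries A) (j : ℕ) :
    coeff j (phiA p A f) = ∑ i ∈ range (j + 1), coeff i f * coeff j (((1 + X) ^ p - 1) ^ i) := by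
  rw [phiA, psSubst, coeff_mk]

theorem coeff_zero_phiA {p : ℕ} {A : Type*} [CommRing A] (f : PowerSeries A) :
    coeff 0 (phiA p A f) = coeff 0 f := by
  simp [coeff_phiA]

/-- For an integral series, membership in the ideal `(p, π^N)` of `ℤ_p[[π]]`. -/
def DivisibleByPBelow (p : ℕ) [Fact p.Prime] (N : ℕ) (f : PowerSeries ℚ_[p]) : Prop :=
  ∀ i < N, ‖coeff i f‖ ≤ (p : ℝ)⁻¹

section Padic

variable {p : ℕ} [Fact p.Prime]

theorem norm_natCast_le_inv_of_dvd {n : ℕ} (h : p ∣ n) : ‖(n : ℚ_[p])‖ ≤ (p : ℝ)⁻¹ := by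
  obtain ⟨d, rfl⟩ := h
  rw [Nat.cast_mul, norm_mul, Padic.norm_p]
  exact mul_le_of_le_one_right (by positivity) (IsUltrametricDist.norm_natCast_le_one _ d)

theorem intSeries_one : IntSeries p 1 := fun n => by
  rw [coeff_one]
  split_ifs <;> simp

theorem IntSeries.mul {f g : PowerSeries ℚ_[p]} (hf : IntSeries p f) (hg : IntSeries p g) :
    IntSeries p (f * g) := fun _ =>
  norm_coeff_mul_le_of_forall fun i j _ => mul_le_one₀ (hf i) (norm_nonneg _) (hg j)

theorem IntSeries.pow {f : PowerSeries ℚ_[p]} (hf : IntSeries p f) (k : ℕ) :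
    IntSeries p (f ^ k) := by
  induction k with
  | zero => exact pow_zero f ▸ intSeries_one
  | succ k ih => exact pow_succ f k ▸ ih.mul hf

theorem DivisibleByPBelow.mono {N M : ℕ} {f : PowerSeries ℚ_[p]} (hf : DivisibleByPBelow p M f)
    (h : N ≤ M) : DivisibleByPBelow p N f := fun i hi => hf i (hi.trans_le h)

theorem DivisibleByPBelow.mul_intSeries {N : ℕ} {f g : PowerSeries ℚ_[p]}
    (hf : DivisibleByPBelow p N f) (hg : IntSeries p g) : DivisibleByPBelow p N (f * g) :=
  fun _ hn => norm_coeff_mul_le_of_forall fun i j hij =>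
    (mul_le_of_le_one_right (norm_nonneg _) (hg j)).trans (hf i (by omega))

theorem intSeries_one_add_X_pow_sub_one : IntSeries p ((1 + X) ^ p - 1) := fun k => by
  rw [coeff_one_add_X_pow_sub_one]
  split_ifs
  · simp
  · exact IsUltrametricDist.norm_natCast_le_one _ _

theorem divisibleByPBelow_one_add_X_pow_sub_one : DivisibleByPBelow p p ((1 + X) ^ p - 1) :=
  fun k hk => by
    rw [coeff_one_add_X_pow_sub_one]
    split_ifs with hk₀
    · simp
    · exact norm_natCast_le_inv_of_dvd ((Fact.out : p.Prime).dvd_choose_self hk₀ hk)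

theorem IntSeries.phiA {f : PowerSeries ℚ_[p]} (hf : IntSeries p f) :
    IntSeries p (phiA p ℚ_[p] f) := fun j => by
  rw [coeff_phiA]
  refine IsUltrametricDist.norm_sum_le_of_forall_le_of_nonneg zero_le_one fun i _ => ?_
  rw [norm_mul]
  exact mul_le_one₀ (hf i) (norm_nonneg _) (intSeries_one_add_X_pow_sub_one.pow i j)

theorem DivisibleByPBelow.phiA {N : ℕ} {f : PowerSeries ℚ_[p]} (hf : DivisibleByPBelow p N f)
    (hf' : IntSeries p f) (hN : N ≤ p) : DivisibleByPBelow p N (phiA p ℚ_[p] f) := fun j hj => by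
  rw [coeff_phiA]
  refine IsUltrametricDist.norm_sum_le_of_forall_le_of_nonneg (by positivity) fun i _ => ?_
  rw [norm_mul]
  rcases i with _ | i
  · rw [pow_zero]
    exact (mul_le_of_le_one_right (norm_nonneg _) (intSeries_one j)).trans (hf 0 (by omega))
  · -- for `i ≥ 1`, the factor `((1+π)^p - 1)^i` already lies in `(p, π^p)`
    have hg : DivisibleByPBelow p N (((1 + X) ^ p - 1) ^ (i + 1)) := by
      rw [pow_succ']
      exact (divisibleByPBelow_one_add_X_pow_sub_one.mono hN).mul_intSeries
        (intSeries_one_add_X_pow_sub_one.pow i)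
    exact (mul_le_of_le_one_left (norm_nonneg _) (hf' _)).trans (hg j hj)

section q

variable {q : PowerSeries ℚ_[p]} (hq : X * q = (1 + X) ^ p - 1)
include hq

theorem coeff_of_X_mul_eq (i : ℕ) : coeff i q = (p.choose (i + 1) : ℚ_[p]) := by
  simpa [coeff_one_add_X_pow_sub_one] using congrArg (coeff (i + 1)) hq

theorem coeff_zero_iterate_phiA (m : ℕ) : coeff 0 ((phiA p ℚ_[p])^[m] q) = p := by
  induction m with
  | zero => simp [coeff_of_X_mul_eq hq]
  | succ m ih => rwa [Function.iterate_succ_apply', coeff_zero_phiA]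

theorem intSeries_iterate_phiA (m : ℕ) : IntSeries p ((phiA p ℚ_[p])^[m] q) := by
  induction m with
  | zero => exact fun i => coeff_of_X_mul_eq hq i ▸ IsUltrametricDist.norm_natCast_le_one _ _
  | succ m ih => exact Function.iterate_succ_apply' .. ▸ ih.phiA

theorem divisibleByPBelow_iterate_phiA (m : ℕ) :
    DivisibleByPBelow p (p - 1) ((phiA p ℚ_[p])^[m] q) := by
  induction m with
  | zero =>
    exact fun i hi => coeff_of_X_mul_eq hq i ▸
      norm_natCast_le_inv_of_dvd ((Fact.out : p.Prime).dvd_choose_self i.succ_ne_zero (by omega))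
  | succ m ih =>
    exact Function.iterate_succ_apply' .. ▸ ih.phiA (intSeries_iterate_phiA hq m) (Nat.sub_le p 1)

end q

theorem memR_inv_p_smul {f : PowerSeries ℚ_[p]} (hf : IntSeries p f)
    (hf' : DivisibleByPBelow p (p - 1) f) : memR p ((p : ℚ_[p])⁻¹ • f) := fun i => by
  have hp : (1 : ℝ) < p := mod_cast (Fact.out : p.Prime).one_lt
  have hp₁ : (0 : ℝ) < p - 1 := by linarith
  rw [map_smul, smul_eq_mul, norm_mul, norm_inv, Padic.norm_p, inv_inv]
  rcases lt_or_ge i (p - 1) with hi | hi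
  · calc (p : ℝ) * ‖coeff i f‖ ≤ p * (p : ℝ)⁻¹ := by gcongr; exact hf' i hi
      _ = 1 := mul_inv_cancel₀ (by positivity)
      _ ≤ _ := Real.one_le_rpow hp.le (by positivity)
  · have hi' : (p : ℝ) - 1 ≤ i := by
      have : ((p - 1 : ℕ) : ℝ) ≤ i := mod_cast hi
      rwa [Nat.cast_sub (Fact.out : p.Prime).one_le, Nat.cast_one] at this
    calc (p : ℝ) * ‖coeff i f‖ ≤ p * 1 := by gcongr; exact hf i
      _ = (p : ℝ) ^ (1 : ℝ) := by rw [mul_one, Real.rpow_one]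
      _ ≤ _ := Real.rpow_le_rpow_of_exponent_le hp.le ((one_le_div hp₁).mpr hi')

theorem memR.inv {f : PowerSeries ℚ_[p]} (hf : memR p f) (hf₀ : ‖constantCoeff f‖ = 1) :
    memR p f⁻¹ := by
  have hp : (0 : ℝ) < p := mod_cast (Fact.out : p.Prime).pos
  refine norm_coeff_inv_le hf₀ (by simp) (fun i j => le_of_eq ?_) hf
  rw [← Real.rpow_add hp, Nat.cast_add, add_div]

end Padic

theorem statement6_general (p : ℕ) [Fact p.Prime]
    (q : PowerSeries ℚ_[p]) (hq : PowerSeries.X * q = (1 + PowerSeries.X) ^ p - 1)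
    (n : ℕ) :
    memR p ((p : ℚ_[p])⁻¹ • (phiA p ℚ_[p])^[n - 1] q) ∧
      memR p ((p : PowerSeries ℚ_[p]) * ((phiA p ℚ_[p])^[n - 1] q)⁻¹) := by
  set Q := (phiA p ℚ_[p])^[n - 1] q
  have hu : memR p ((p : ℚ_[p])⁻¹ • Q) :=
    memR_inv_p_smul (intSeries_iterate_phiA hq _) (divisibleByPBelow_iterate_phiA hq _)
  have hu₀ : ‖constantCoeff ((p : ℚ_[p])⁻¹ • Q)‖ = 1 := by
    have hp : (p : ℚ_[p]) ≠ 0 := Nat.cast_ne_zero.mpr (Fact.out : p.Prime).ne_zero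
    rw [← coeff_zero_eq_constantCoeff_apply, map_smul, coeff_zero_iterate_phiA hq,
      smul_eq_mul, inv_mul_cancel₀ hp, norm_one]
  have hinv : (p : PowerSeries ℚ_[p]) * Q⁻¹ = ((p : ℚ_[p])⁻¹ • Q)⁻¹ := by
    rw [PowerSeries.smul_inv, inv_inv, smul_eq_C_mul, map_natCast]
  exact ⟨hu, hinv ▸ hu.inv hu₀⟩

theorem statement6 (p : ℕ) [Fact p.Prime]
    (q : PowerSeries ℚ_[p]) (hq : PowerSeries.X * q = (1 + PowerSeries.X) ^ p - 1)
    (n : ℕ) (hn : 1 ≤ n) :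
    memR p ((p : ℚ_[p])⁻¹ • (phiA p ℚ_[p])^[n - 1] q) ∧
      memR p ((p : PowerSeries ℚ_[p]) * ((phiA p ℚ_[p])^[n - 1] q)⁻¹) :=
  statement6_general p q hq n
end

section
/- Let k ≥ 2 be an integer and set m = ⌊(k−2)/(p−1)⌋. Writing p^m·λ_−^{k−1}·λ_+^{−(k−1)} = ∑_{i≥0} z_i π^i in Q_p[[π]], one has z_i ∈ Z_p for all 0 ≤ i ≤ k−2; consequently the truncation z = z_0 + z_1 π + ⋯ + z_{k−2} π^{k−2} lies in Z_p[[π]] (it is a polynomial over Z_p of degree at most k−2). -/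
open PowerSeries Filter Finset

/-!
Each factor `φⁿ(q)/p` of `λ₊` and `λ₋` has coefficients `‖a_i‖ ≤ p^⌊i/(p-1)⌋`: for `q/p` this
holds because `p ∣ binom(p, i+1)` for `i < p - 1`, and `φ` preserves it because it substitutes a
series with integral coefficients. Bounds `‖a_i‖ ≤ r^{e(i)}` with `e` superadditive are stable
under products, inverses of series with constant term `1`, and coefficientwise limits, so they
hold for `λ₋^{k-1} λ₊^{-(k-1)}`. For `i ≤ k - 2` we have `⌊i/(p-1)⌋ ≤ m`, so `p^m` cancels the
bound.
-/

section Substitution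

variable {A : Type*} [CommRing A]

lemma coeff_psSubst (g f : A⟦X⟧) (j : ℕ) :
    coeff j (psSubst g f) = ∑ i ∈ range (j + 1), coeff i f * coeff j (g ^ i) :=
  coeff_mk _ _

lemma constantCoeff_psSubst (g f : A⟦X⟧) : constantCoeff (psSubst g f) = constantCoeff f := by
  rw [← coeff_zero_eq_constantCoeff_apply, ← coeff_zero_eq_constantCoeff_apply, coeff_psSubst]
  simp

lemma psSubst_smul (g : A⟦X⟧) (a : A) (f : A⟦X⟧) : psSubst g (a • f) = a • psSubst g f := by
  ext j
  simp only [coeff_psSubst, coeff_smul, smul_eq_mul, mul_sum, mul_assoc]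

lemma phiA_iterate_smul (p : ℕ) (a : A) (f : A⟦X⟧) (n : ℕ) :
    (phiA p A)^[n] (a • f) = a • (phiA p A)^[n] f :=
  Function.Commute.iterate_left (f := phiA p A) (g := (a • ·)) (psSubst_smul _ a) n f

lemma constantCoeff_phiA_iterate (p : ℕ) (f : A⟦X⟧) (n : ℕ) :
    constantCoeff ((phiA p A)^[n] f) = constantCoeff f := by
  simpa using Function.Semiconj.iterate_right (f := constantCoeff (R := A)) (ga := phiA p A)
    (gb := id) (constantCoeff_psSubst _) n f

end Substitution

section BoundedCoeffs

variable {K : Type*} [NormedField K]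

lemma eq_zero_of_superadditive {e : ℕ → ℕ} (he : ∀ a b, e a + e b ≤ e (a + b)) : e 0 = 0 := by
  simpa using he 0 0

lemma norm_mul_le_pow_of_superadditive {r : ℝ} (hr : 1 ≤ r) {e : ℕ → ℕ}
    (he : ∀ a b, e a + e b ≤ e (a + b)) {a b : K} {i j : ℕ}
    (ha : ‖a‖ ≤ r ^ e i) (hb : ‖b‖ ≤ r ^ e j) : ‖a * b‖ ≤ r ^ e (i + j) :=
  calc ‖a * b‖ ≤ r ^ e i * r ^ e j := by
        rw [norm_mul]; exact mul_le_mul ha hb (norm_nonneg b) (by positivity)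
    _ ≤ r ^ e (i + j) := by rw [← pow_add]; exact pow_le_pow_right₀ hr (he i j)

variable [IsUltrametricDist K]

def boundedCoeffs (r : ℝ) (hr : 1 ≤ r) (e : ℕ → ℕ) (he : ∀ a b, e a + e b ≤ e (a + b)) :
    Submonoid K⟦X⟧ where
  carrier := {f | ∀ i, ‖coeff i f‖ ≤ r ^ e i}
  one_mem' i := by
    rw [coeff_one]
    split_ifs
    · simpa using one_le_pow₀ hr
    · simpa using pow_nonneg (zero_le_one.trans hr) _
  mul_mem' {f g} hf hg n := by
    rw [coeff_mul]
    refine IsUltrametricDist.norm_sum_le_of_forall_le_of_nonneg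
      (pow_nonneg (zero_le_one.trans hr) _) fun x hx => ?_
    rw [← mem_antidiagonal.mp hx]
    exact norm_mul_le_pow_of_superadditive hr he (hf x.1) (hg x.2)

variable {r : ℝ} {hr : 1 ≤ r} {e : ℕ → ℕ} {he : ∀ a b, e a + e b ≤ e (a + b)}

lemma inv_mem_boundedCoeffs {f : K⟦X⟧} (hf : f ∈ boundedCoeffs r hr e he)
    (h1 : constantCoeff f = 1) : f⁻¹ ∈ boundedCoeffs r hr e he := by
  intro n
  induction n using Nat.strong_induction_on with
  | _ n ih =>
    rw [coeff_inv, h1, inv_one]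
    split_ifs with hn
    · simp [hn, eq_zero_of_superadditive he]
    rw [neg_one_mul, norm_neg]
    refine IsUltrametricDist.norm_sum_le_of_forall_le_of_nonneg
      (pow_nonneg (zero_le_one.trans hr) _) fun x hx => ?_
    split_ifs with hlt
    · rw [← mem_antidiagonal.mp hx]
      exact norm_mul_le_pow_of_superadditive hr he (hf x.1) (ih x.2 hlt)
    · simpa using pow_nonneg (zero_le_one.trans hr) _

lemma norm_coeff_one_add_X_pow_sub_one_pow_le_one (p i j : ℕ) :
    ‖coeff j (((1 + X : K⟦X⟧) ^ p - 1) ^ i)‖ ≤ 1 := by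
  have hint : ((1 + X : K⟦X⟧) ^ p - 1) ^ i =
      PowerSeries.map (Int.castRingHom K) (((1 + X) ^ p - 1) ^ i) := by
    simp
  rw [hint, coeff_map]
  exact IsUltrametricDist.norm_intCast_le_one K _

lemma mapsTo_phiA_boundedCoeffs (p : ℕ) :
    Set.MapsTo (phiA p K) (boundedCoeffs (K := K) r hr e he)
      (boundedCoeffs (K := K) r hr e he) := by
  intro f hf j
  rw [phiA, coeff_psSubst]
  refine IsUltrametricDist.norm_sum_le_of_forall_le_of_nonneg
    (pow_nonneg (zero_le_one.trans hr) _) fun i hi => ?_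
  -- `e` is monotone, being superadditive with values in `ℕ`
  obtain ⟨d, rfl⟩ := Nat.exists_eq_add_of_le (Nat.lt_succ_iff.mp (mem_range.mp hi))
  calc ‖coeff i f * coeff (i + d) (((1 + X) ^ p - 1) ^ i)‖ ≤ r ^ e i * 1 := by
        rw [norm_mul]
        exact mul_le_mul (hf i) (norm_coeff_one_add_X_pow_sub_one_pow_le_one p i _)
          (norm_nonneg _) (pow_nonneg (zero_le_one.trans hr) _)
    _ ≤ r ^ e (i + d) := by
        rw [mul_one]; exact pow_le_pow_right₀ hr ((Nat.le_add_right _ _).trans (he i d))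

lemma mem_boundedCoeffs_of_coeffTendsto {p : ℕ} [Fact p.Prime] {F : ℕ → ℚ_[p]⟦X⟧}
    {L : ℚ_[p]⟦X⟧} (hF : CoeffTendsto p F L) (hmem : ∀ N, F N ∈ boundedCoeffs r hr e he) :
    L ∈ boundedCoeffs r hr e he := fun d =>
  le_of_tendsto (hF d).norm (Eventually.of_forall fun N => hmem N d)

end BoundedCoeffs

section Padic

variable {p : ℕ} [Fact p.Prime] {q : ℚ_[p]⟦X⟧}

/-- The ring `R` of `memR`, with the exponent `i/(p-1)` rounded down; for coefficients in `ℚ_p`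
this is the same condition, since `p`-adic norms are integral powers of `p`. -/
noncomputable def ringR (p : ℕ) [Fact p.Prime] : Submonoid ℚ_[p]⟦X⟧ :=
  boundedCoeffs p (Nat.one_le_cast.mpr (Fact.out : p.Prime).one_lt.le) (· / (p - 1))
    (fun _ _ => Nat.div_add_div_le_add_div)

lemma coeff_q (hq : X * q = (1 + X) ^ p - 1) (i : ℕ) :
    coeff i q = (p.choose (i + 1) : ℚ_[p]) := by
  have h := congrArg (coeff (i + 1)) hq
  rw [coeff_succ_X_mul] at h
  rw [h, map_sub, ← Polynomial.coe_X, ← Polynomial.coe_one, ← Polynomial.coe_add,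
    ← Polynomial.coe_pow, Polynomial.coeff_coe, Polynomial.coeff_one_add_X_pow]
  simp

lemma inv_p_smul_q_mem_ringR (hq : X * q = (1 + X) ^ p - 1) : (p : ℚ_[p])⁻¹ • q ∈ ringR p := by
  have hp := (Fact.out : p.Prime)
  intro i
  rw [coeff_smul, coeff_q hq, smul_eq_mul]
  by_cases hlt : i < p - 1
  · obtain ⟨t, ht⟩ := hp.dvd_choose_self (Nat.succ_ne_zero i) (by omega)
    have hpne : (p : ℚ_[p]) ≠ 0 := by exact_mod_cast hp.ne_zero
    rw [ht, Nat.cast_mul, inv_mul_cancel_left₀ hpne]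
    show _ ≤ (p : ℝ) ^ (i / (p - 1))
    rw [Nat.div_eq_of_lt hlt, pow_zero]
    exact IsUltrametricDist.norm_natCast_le_one ℚ_[p] t
  · have hexp : 1 ≤ i / (p - 1) :=
      (Nat.one_le_div_iff (by have := hp.two_le; omega)).mpr (by omega)
    calc ‖(p : ℚ_[p])⁻¹ * (p.choose (i + 1) : ℚ_[p])‖ ≤ (p : ℝ) * 1 := by
          rw [norm_mul, norm_inv, Padic.norm_p, inv_inv]
          exact mul_le_mul_of_nonneg_left (IsUltrametricDist.norm_natCast_le_one ℚ_[p] _)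
            (Nat.cast_nonneg p)
      _ ≤ (p : ℝ) ^ (i / (p - 1)) := by
          rw [mul_one]; exact le_self_pow₀ (Nat.one_le_cast.mpr hp.one_lt.le) (by omega)

lemma inv_p_smul_phiA_iterate_q_mem_ringR (hq : X * q = (1 + X) ^ p - 1) (n : ℕ) :
    (p : ℚ_[p])⁻¹ • (phiA p ℚ_[p])^[n] q ∈ ringR p := by
  rw [← phiA_iterate_smul]
  exact (mapsTo_phiA_boundedCoeffs p).iterate n (inv_p_smul_q_mem_ringR hq)

lemma constantCoeff_inv_p_smul_phiA_iterate_q (hq : X * q = (1 + X) ^ p - 1) (n : ℕ) :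
    constantCoeff ((p : ℚ_[p])⁻¹ • (phiA p ℚ_[p])^[n] q) = 1 := by
  have hpne : (p : ℚ_[p]) ≠ 0 := by exact_mod_cast (Fact.out : p.Prime).ne_zero
  rw [← phiA_iterate_smul, constantCoeff_phiA_iterate, ← coeff_zero_eq_constantCoeff_apply,
    coeff_smul, coeff_q hq, smul_eq_mul]
  simp [hpne]

lemma partialPlus_mem_ringR (hq : X * q = (1 + X) ^ p - 1) (N : ℕ) :
    partialPlus p q N ∈ ringR p :=
  prod_mem fun _ _ => inv_p_smul_phiA_iterate_q_mem_ringR hq _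

lemma partialMinus_mem_ringR (hq : X * q = (1 + X) ^ p - 1) (N : ℕ) :
    partialMinus p q N ∈ ringR p :=
  prod_mem fun _ _ => inv_p_smul_phiA_iterate_q_mem_ringR hq _

lemma constantCoeff_of_coeffTendsto_partialPlus (hq : X * q = (1 + X) ^ p - 1)
    {lamPlus : ℚ_[p]⟦X⟧} (hplus : CoeffTendsto p (partialPlus p q) lamPlus) :
    constantCoeff lamPlus = 1 := by
  have hconst (N : ℕ) : constantCoeff (partialPlus p q N) = 1 := by
    rw [partialPlus, map_prod]
    exact prod_eq_one fun n _ => constantCoeff_inv_p_smul_phiA_iterate_q hq _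
  have h0 := hplus 0
  simp only [coeff_zero_eq_constantCoeff_apply, hconst] at h0
  exact tendsto_nhds_unique h0 tendsto_const_nhds

lemma norm_coeff_p_pow_mul_le_one {w : ℚ_[p]⟦X⟧} (hw : w ∈ ringR p) {i m : ℕ}
    (hi : i / (p - 1) ≤ m) : ‖coeff i ((p : ℚ_[p]⟦X⟧) ^ m * w)‖ ≤ 1 := by
  have hp : (1 : ℝ) ≤ p := Nat.one_le_cast.mpr (Fact.out : p.Prime).one_lt.le
  rw [← map_natCast (C (R := ℚ_[p])), ← map_pow, coeff_C_mul, norm_mul, norm_pow, Padic.norm_p]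
  calc (p : ℝ)⁻¹ ^ m * ‖coeff i w‖ ≤ (p : ℝ)⁻¹ ^ m * (p : ℝ) ^ m :=
        mul_le_mul_of_nonneg_left ((hw i).trans (pow_le_pow_right₀ hp hi)) (by positivity)
    _ = 1 := by rw [← mul_pow, inv_mul_cancel₀ (by positivity), one_pow]

end Padic

theorem statement7_general (p : ℕ) [Fact p.Prime] (k : ℕ)
    (q : PowerSeries ℚ_[p]) (hq : PowerSeries.X * q = (1 + PowerSeries.X) ^ p - 1)
    (lamPlus lamMinus : PowerSeries ℚ_[p])
    (hplus : CoeffTendsto p (partialPlus p q) lamPlus)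
    (hminus : CoeffTendsto p (partialMinus p q) lamMinus) :
    (∀ i ≤ k - 2, ‖PowerSeries.coeff (R := ℚ_[p]) i (zFull p k lamPlus lamMinus)‖ ≤ 1) ∧
      IntSeries p (zSeries p k lamPlus lamMinus) := by
  have hminusR : lamMinus ∈ ringR p :=
    mem_boundedCoeffs_of_coeffTendsto hminus (partialMinus_mem_ringR hq)
  have hplusInvR : lamPlus⁻¹ ∈ ringR p :=
    inv_mem_boundedCoeffs (mem_boundedCoeffs_of_coeffTendsto hplus (partialPlus_mem_ringR hq))
      (constantCoeff_of_coeffTendsto_partialPlus hq hplus)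
  have hzFull : ∀ i ≤ k - 2, ‖coeff i (zFull p k lamPlus lamMinus)‖ ≤ 1 := fun i hi => by
    rw [zFull, mul_assoc]
    exact norm_coeff_p_pow_mul_le_one
      (mul_mem (pow_mem hminusR _) (pow_mem hplusInvR _)) (Nat.div_le_div_right hi)
  refine ⟨hzFull, fun n => ?_⟩
  rw [zSeries, coeff_mk]
  split_ifs with hn
  · exact hzFull n hn
  · simp

theorem statement7 (p : ℕ) [Fact p.Prime] (k : ℕ) (hk : 2 ≤ k)
    (q : PowerSeries ℚ_[p]) (hq : PowerSeries.X * q = (1 + PowerSeries.X) ^ p - 1)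
    (lamPlus lamMinus : PowerSeries ℚ_[p])
    (hplus : CoeffTendsto p (partialPlus p q) lamPlus)
    (hminus : CoeffTendsto p (partialMinus p q) lamMinus) :
    (∀ i ≤ k - 2, ‖PowerSeries.coeff (R := ℚ_[p]) i (zFull p k lamPlus lamMinus)‖ ≤ 1) ∧
      IntSeries p (zSeries p k lamPlus lamMinus) :=
  statement7_general p k q hq lamPlus lamMinus hplus hminus
end
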